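/- Reduction to diagonal case: the inequality det(Σ_X + A^{1/2}Σ_Z A^{1/2})^{1/n} ≥ det(I−A)^{1/n} det(Σ_X)^{1/n} + det(A)^{1/n} det(Σ_X+Σ_Z)^{1/n} holds for all positive definite Σ_X and all commuting pairs (A, Σ_Z) with 0 ⪯ A ⪯ I if and only if it holds for all positive definite Σ_X with Σ_Z = I and A diagonal with entries in [0,1]. -/

import Mathlib

open Matrix

/-- The square root of a positive semidefinite matrix, with the definition it had in the
older Mathlib (removed since). -/
noncomputable def Matrix.PosSemidef.sqrt {m : Type*} [Fintype m] [DecidableEq m]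
    {A : Matrix m m ℝ} (hA : A.PosSemidef) : Matrix m m ℝ :=
  hA.1.eigenvectorUnitary.1 * diagonal ((↑) ∘ (√·) ∘ hA.1.eigenvalues) *
    (star hA.1.eigenvectorUnitary : Matrix m m ℝ)

/-!
Write `N = A^{1/2} Σ_Z A^{1/2}`. Replacing `Σ_X, Σ_Z, N` by `Bᵀ Σ_X B, Bᵀ Σ_Z B, Bᵀ N B` and `A` by
`B⁻¹ A B` multiplies `det Σ_X`, `det (Σ_X + Σ_Z)` and `det (Σ_X + N)` by the same factor
`det B ^ 2` and fixes `det A` and `det (I - A)`, so the inequality is invariant under it.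
For `Σ_Z ≻ 0` the choice `B = Σ_Z^{1/2}`, which commutes with `A`, reduces to `Σ_Z = I`, `N = A`;
an orthogonal `B` diagonalizing `A` then reduces to diagonal `A`. A singular `Σ_Z` is the limit
of `Σ_Z + ε I` as `ε → 0⁺`.
-/

open Filter Topology

variable {m : Type*} [Fintype m] [DecidableEq m]

namespace Matrix.PosSemidef

variable {A : Matrix m m ℝ} (hA : A.PosSemidef)
include hA

theorem sqrt_eq_cfc : hA.sqrt = cfc Real.sqrt A := by
  rw [hA.1.cfc_eq, IsHermitian.cfc, Unitary.conjStarAlgAut_apply]; rfl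

theorem sqrt_mul_self : hA.sqrt * hA.sqrt = A := by
  conv_rhs => rw [← cfc_id' ℝ A hA.1.isSelfAdjoint]
  rw [sqrt_eq_cfc, ← cfc_mul ..]
  refine cfc_congr fun x hx => Real.mul_self_sqrt ?_
  rw [hA.1.spectrum_real_eq_range_eigenvalues] at hx
  obtain ⟨i, rfl⟩ := hx
  exact hA.eigenvalues_nonneg i

theorem isHermitian_sqrt : hA.sqrt.IsHermitian :=
  hA.sqrt_eq_cfc ▸ cfc_predicate _ A

theorem commute_sqrt {B : Matrix m m ℝ} (h : Commute A B) : Commute hA.sqrt B :=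
  hA.sqrt_eq_cfc ▸ h.cfc_real _

end Matrix.PosSemidef

/-- The inequality of the theorem with exponent `r` and the noise term `A^{1/2} SZ A^{1/2}`
abstracted to `N`. -/
def DetIneq (r : ℝ) (SX A SZ N : Matrix m m ℝ) : Prop :=
  (1 - A).det ^ r * SX.det ^ r + A.det ^ r * (SX + SZ).det ^ r ≤ (SX + N).det ^ r

theorem detIneq_diagonal_iff {r : ℝ} {SX : Matrix m m ℝ} {a : m → ℝ} :
    DetIneq r SX (diagonal a) 1 (diagonal a) ↔
      (∏ i, (1 - a i)) ^ r * SX.det ^ r + (∏ i, a i) ^ r * (SX + 1).det ^ r ≤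
        (SX + diagonal a).det ^ r := by
  rw [DetIneq, ← diagonal_one, diagonal_sub, det_diagonal, det_diagonal, diagonal_one]

theorem DetIneq.conj {r : ℝ} {SX A SZ N B : Matrix m m ℝ} (h : DetIneq r SX A SZ N)
    (hB : IsUnit B) (hX : SX.PosDef) (hZ : SZ.PosSemidef) (hN : N.PosSemidef) :
    DetIneq r (star B * SX * B) (B⁻¹ * A * B) (star B * SZ * B) (star B * N * B) := by
  have hdet (M : Matrix m m ℝ) : (star B * M * B).det = B.det ^ 2 * M.det := by
    rw [det_mul, det_mul, star_eq_conjTranspose, det_conjTranspose, star_trivial]; ring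
  have hsub : 1 - B⁻¹ * A * B = B⁻¹ * (1 - A) * B := by
    rw [mul_sub, sub_mul, mul_one, nonsing_inv_mul B ((isUnit_iff_isUnit_det B).mp hB)]
  have hc : 0 ≤ B.det ^ 2 := sq_nonneg _
  unfold DetIneq at h ⊢
  rw [← add_mul, ← mul_add, ← add_mul, ← mul_add, hdet, hdet, hdet, hsub, det_conj' hB,
    det_conj' hB, Real.mul_rpow hc hX.det_pos.le,
    Real.mul_rpow hc (hX.add_posSemidef hZ).det_pos.le,
    Real.mul_rpow hc (hX.add_posSemidef hN).det_pos.le]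
  have := mul_le_mul_of_nonneg_left h (Real.rpow_nonneg hc r)
  linarith

theorem DetIneq.of_tendsto {ι : Type*} {l : Filter ι} [l.NeBot] {r : ℝ}
    {SX A SZ N : Matrix m m ℝ} {SZ' N' : ι → Matrix m m ℝ}
    (hSZ : Tendsto SZ' l (𝓝 SZ)) (hN : Tendsto N' l (𝓝 N))
    (hXZ : (SX + SZ).det ≠ 0) (hXN : (SX + N).det ≠ 0)
    (h : ∀ᶠ i in l, DetIneq r SX A (SZ' i) (N' i)) : DetIneq r SX A SZ N := by
  have hdet {M' : ι → Matrix m m ℝ} {M : Matrix m m ℝ} (hM : Tendsto M' l (𝓝 M))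
      (hXM : (SX + M).det ≠ 0) : Tendsto (fun i => (SX + M' i).det ^ r) l (𝓝 ((SX + M).det ^ r)) :=
    (((continuous_id.matrix_det).tendsto _).comp (tendsto_const_nhds.add hM)).rpow_const
      (Or.inl hXM)
  exact le_of_tendsto_of_tendsto
    (tendsto_const_nhds.add (tendsto_const_nhds.mul (hdet hSZ hXZ))) (hdet hN hXN) h

theorem detIneq_one_of_diagonal {r : ℝ} {A : Matrix m m ℝ} (hA : A.PosSemidef)
    (hAI : (1 - A).PosSemidef)
    (h : ∀ SX : Matrix m m ℝ, SX.PosDef → ∀ a : m → ℝ, (∀ i, a i ∈ Set.Icc (0 : ℝ) 1) →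
      DetIneq r SX (diagonal a) 1 (diagonal a))
    {SX : Matrix m m ℝ} (hX : SX.PosDef) : DetIneq r SX A 1 A := by
  set U : Matrix m m ℝ := (hA.1.eigenvectorUnitary : Matrix m m ℝ)
  set a := hA.1.eigenvalues
  have hUU : star U * U = 1 := Unitary.coe_star_mul_self _
  have hUU' : U * star U = 1 := Unitary.coe_mul_star_self _
  have hU : IsUnit (star U) := ⟨⟨star U, U, hUU, hUU'⟩, rfl⟩
  have hUinv : (star U)⁻¹ = U := inv_eq_left_inv hUU'
  have hspec : U * diagonal a * star U = A := by
    conv_rhs => rw [hA.1.spectral_theorem, Unitary.conjStarAlgAut_apply]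
    rfl
  have hconj (M : Matrix m m ℝ) : U * (star U * M * U) * star U = M := by
    simp only [← mul_assoc, hUU', one_mul]; rw [mul_assoc, hUU', mul_one]
  have hdiag : star U * A * U = diagonal a := by
    rw [← hspec]; simp only [← mul_assoc, hUU, one_mul]; rw [mul_assoc, hUU, mul_one]
  have ha (i : m) : a i ∈ Set.Icc (0 : ℝ) 1 := by
    have h1 : (star U * (1 - A) * U).PosSemidef := hAI.conjTranspose_mul_mul_same U
    rw [mul_sub, sub_mul, mul_one, hUU, hdiag, ← diagonal_one, diagonal_sub] at h1
    exact ⟨hA.eigenvalues_nonneg i, by simpa using h1.diag_nonneg (i := i)⟩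
  have hX' : (star U * SX * U).PosDef := hU.star.posDef_star_left_conjugate_iff.mpr hX
  have := (h _ hX' a ha).conj hU hX' .one (.diagonal fun i => (ha i).1)
  rwa [star_star, hUinv, hspec, hconj, mul_one, hUU'] at this

theorem detIneq_sqrt_mul_mul_sqrt_of_posDef {r : ℝ} {SX A SZ : Matrix m m ℝ}
    (hX : SX.PosDef) (hA : A.PosSemidef) (hZ : SZ.PosDef) (hAZ : Commute A SZ)
    (h : ∀ SX : Matrix m m ℝ, SX.PosDef → DetIneq r SX A 1 A) :
    DetIneq r SX A SZ (hA.sqrt * SZ * hA.sqrt) := by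
  set R := hZ.posSemidef.sqrt
  have hRR : R * R = SZ := hZ.posSemidef.sqrt_mul_self
  have hRs : star R = R := hZ.posSemidef.isHermitian_sqrt
  have hR : IsUnit R := isUnit_of_mul_isUnit_left (hRR ▸ hZ.isUnit)
  have hRdet : IsUnit R.det := (isUnit_iff_isUnit_det R).mp hR
  have hRinvs : star R⁻¹ = R⁻¹ := by
    rw [star_eq_conjTranspose, conjTranspose_nonsing_inv, ← star_eq_conjTranspose, hRs]
  have hAR : Commute A R := (hZ.posSemidef.commute_sqrt hAZ.symm).symm
  have hQR : Commute hA.sqrt R := hA.commute_sqrt hAR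
  have hX' : (R⁻¹ * SX * R⁻¹).PosDef := by
    have hRinv : IsUnit R⁻¹ := isUnit_nonsing_inv_iff.mpr hR
    simpa only [hRinvs] using hRinv.posDef_star_left_conjugate_iff.mpr hX
  have hSX : R * (R⁻¹ * SX * R⁻¹) * R = SX := by
    simp only [← mul_assoc, mul_nonsing_inv R hRdet, one_mul]
    rw [mul_assoc, nonsing_inv_mul R hRdet, mul_one]
  have hA' : R⁻¹ * A * R = A := by
    rw [mul_assoc, hAR.eq, ← mul_assoc, nonsing_inv_mul R hRdet, one_mul]
  have hN : R * A * R = hA.sqrt * SZ * hA.sqrt := by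
    rw [← hRR]
    conv_lhs => rw [← hA.sqrt_mul_self]
    calc R * (hA.sqrt * hA.sqrt) * R = (R * hA.sqrt) * (hA.sqrt * R) := by noncomm_ring
      _ = (hA.sqrt * R) * (R * hA.sqrt) := by rw [hQR.eq]
      _ = _ := by noncomm_ring
  have := (h _ hX').conj hR hX' .one hA
  rwa [hRs, hSX, hA', mul_one, hRR, hN] at this

theorem detIneq_sqrt_mul_mul_sqrt {r : ℝ} {SX A SZ : Matrix m m ℝ}
    (hX : SX.PosDef) (hA : A.PosSemidef) (hZ : SZ.PosSemidef) (hAZ : Commute A SZ)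
    (h : ∀ SX : Matrix m m ℝ, SX.PosDef → DetIneq r SX A 1 A) :
    DetIneq r SX A SZ (hA.sqrt * SZ * hA.sqrt) := by
  set Q := hA.sqrt
  have hQ : Qᴴ = Q := hA.isHermitian_sqrt
  have hshift : Continuous fun ε : ℝ => SZ + ε • (1 : Matrix m m ℝ) := by fun_prop
  have hlim : Tendsto (fun ε : ℝ => SZ + ε • (1 : Matrix m m ℝ)) (𝓝[>] 0) (𝓝 SZ) :=
    (hshift.tendsto' 0 SZ (by simp)).mono_left nhdsWithin_le_nhds
  refine DetIneq.of_tendsto hlim ((tendsto_const_nhds.mul hlim).mul tendsto_const_nhds)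
    (hX.add_posSemidef hZ).det_pos.ne' ?_ (eventually_nhdsWithin_of_forall fun ε hε => ?_)
  · have hN : (Q * SZ * Q).PosSemidef := by
      simpa only [hQ] using hZ.mul_mul_conjTranspose_same Q
    exact (hX.add_posSemidef hN).det_pos.ne'
  · have hZε : (SZ + ε • 1).PosDef := PosDef.posSemidef_add hZ (PosDef.one.smul hε)
    exact detIneq_sqrt_mul_mul_sqrt_of_posDef hX hA hZε
      (hAZ.add_right ((Commute.one_right A).smul_right ε)) h

theorem stmt_18_general {n : ℕ} :
    (∀ (SX A SZ : Matrix (Fin n) (Fin n) ℝ) (hX : SX.PosDef)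
        (hA : A.PosSemidef) (hZ : SZ.PosSemidef) (hAI : (1 - A).PosSemidef),
        A * SZ = SZ * A →
        (SX + hA.sqrt * SZ * hA.sqrt).det ^ ((n : ℝ)⁻¹) ≥
          (1 - A).det ^ ((n : ℝ)⁻¹) * SX.det ^ ((n : ℝ)⁻¹) +
            A.det ^ ((n : ℝ)⁻¹) * (SX + SZ).det ^ ((n : ℝ)⁻¹)) ↔
    (∀ (SX : Matrix (Fin n) (Fin n) ℝ) (hX : SX.PosDef) (a : Fin n → ℝ),
        (∀ i, a i ∈ Set.Icc (0 : ℝ) 1) →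
        (SX + diagonal a).det ^ ((n : ℝ)⁻¹) ≥
          (∏ i, (1 - a i)) ^ ((n : ℝ)⁻¹) * SX.det ^ ((n : ℝ)⁻¹) +
            (∏ i, a i) ^ ((n : ℝ)⁻¹) * (SX + 1).det ^ ((n : ℝ)⁻¹)) := by
  constructor
  · intro h SX hX a ha
    have hA : (diagonal a).PosSemidef := .diagonal fun i => (ha i).1
    have hAI : (1 - diagonal a).PosSemidef := by
      rw [← diagonal_one, diagonal_sub]
      exact .diagonal fun i => sub_nonneg.mpr (ha i).2
    have := h SX _ 1 hX hA .one hAI (Commute.one_right _)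
    rw [mul_one, hA.sqrt_mul_self] at this
    exact detIneq_diagonal_iff.mp this
  · intro h SX A SZ hX hA hZ hAI hAZ
    refine detIneq_sqrt_mul_mul_sqrt hX hA hZ hAZ fun _ hX => detIneq_one_of_diagonal hA hAI ?_ hX
    exact fun SX hX a ha => detIneq_diagonal_iff.mpr (h SX hX a ha)

theorem stmt_18 {n : ℕ} (hn : 0 < n) :
    (∀ (SX A SZ : Matrix (Fin n) (Fin n) ℝ) (hX : SX.PosDef)
        (hA : A.PosSemidef) (hZ : SZ.PosSemidef) (hAI : (1 - A).PosSemidef),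
        A * SZ = SZ * A →
        (SX + hA.sqrt * SZ * hA.sqrt).det ^ ((n : ℝ)⁻¹) ≥
          (1 - A).det ^ ((n : ℝ)⁻¹) * SX.det ^ ((n : ℝ)⁻¹) +
            A.det ^ ((n : ℝ)⁻¹) * (SX + SZ).det ^ ((n : ℝ)⁻¹)) ↔
    (∀ (SX : Matrix (Fin n) (Fin n) ℝ) (hX : SX.PosDef) (a : Fin n → ℝ),
        (∀ i, a i ∈ Set.Icc (0 : ℝ) 1) →
        (SX + diagonal a).det ^ ((n : ℝ)⁻¹) ≥
          (∏ i, (1 - a i)) ^ ((n : ℝ)⁻¹) * SX.det ^ ((n : ℝ)⁻¹) +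
            (∏ i, a i) ^ ((n : ℝ)⁻¹) * (SX + 1).det ^ ((n : ℝ)⁻¹)) :=
  stmt_18_general
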